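/- With the big sentence constructed from a 3-CNF formula φ as in the context: (i) for every truth assignment A : Fin p × Bool → Bool such that every clause of φ contains a literal L with A L = true, there exists a solution of the big sentence in which, for every literal L occurring in φ, h_{X_L} (z_L, true) = 1 if and only if A L = true; and (ii) conversely, in every solution of the big sentence, every clause of φ contains a literal L with h_{X_L} (z_L, true) = 1. (The assignments making the big sentence grammatical are exactly those in which the variables x_{i,b} are assigned truth values making all the clauses true.) -/

import Mathlib

/-!
In a solution, `S` and every `D_j` are forced to be the bare generators `s` and `d`. Every
`X_L` has signed count `±1` at `z_L` and `0` at `d`, so wherever the `X_L` contribute exactly the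
`z`-part of the clause types, the block of clause `j` evaluates to
`sgn C_j + forget C_j = 2 · C_j(·, +) ≥ 0`; as the blocks sum to `0`, `C_j` has no positive
occurrence there. This happens at `d`, and at `z_L` whenever `X_L` carries `z_L` positively.
Since a functional `C_j` has some positive occurrence, it must sit at some `z_L` of the clause
with `X_L (z_L, true) = 1`.

Conversely, for a satisfying assignment let `X_L = z_L^{∓1} y_L y_L⁻¹` (exponent `-1` iff `L` is
true) and `C_j = d⁻¹ z_{L₁}^{±1} z_{L₂}^{±1} z_{L₃}^{±1}` with the opposite signs: each clause
block cancels, and a true literal of the clause makes `C_j` functional.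
-/

/-- The positive part of a signed multiset: `posPart μ a = μ (a, false)`. -/
noncomputable def posPart {α : Type*} (μ : α × Bool →₀ ℕ) : α →₀ ℕ :=
  Finsupp.comapDomain (fun a => (a, false)) μ (fun _ _ _ _ h => congrArg Prod.fst h)

/-- The negative part of a signed multiset: `negPart μ a = μ (a, true)`. -/
noncomputable def negPart {α : Type*} (μ : α × Bool →₀ ℕ) : α →₀ ℕ :=
  Finsupp.comapDomain (fun a => (a, true)) μ (fun _ _ _ _ h => congrArg Prod.fst h)

/-- Forgetting the signs: `forget μ a = μ (a, false) + μ (a, true)`. -/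
noncomputable def forget {α : Type*} (μ : α × Bool →₀ ℕ) : α →₀ ℕ :=
  posPart μ + negPart μ

/-- The signed sum: `sgn μ a = (μ (a, false) : ℤ) − (μ (a, true) : ℤ)`. -/
noncomputable def sgn {α : Type*} (μ : α × Bool →₀ ℕ) : α →₀ ℤ :=
  (posPart μ).mapRange (Nat.cast : ℕ → ℤ) Nat.cast_zero
    - (negPart μ).mapRange (Nat.cast : ℕ → ℤ) Nat.cast_zero

/-- A signed multiset is functional if it is a single generator, or it has at least one
occurrence with exponent `+1` and at least one with exponent `−1`. -/
def Functional {α : Type*} (μ : α × Bool →₀ ℕ) : Prop :=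
  (∃ a : α, μ = Finsupp.single (a, false) 1) ∨
    (∃ a b : α, 0 < μ (a, false) ∧ 0 < μ (b, true))

/-- A list of signed multisets is grammatical for `s` if the signed sums of its entries
add up to `Finsupp.single s 1`. -/
noncomputable def Grammatical {α : Type*} (s : α) (l : List (α × Bool →₀ ℕ)) : Prop :=
  (l.map sgn).sum = Finsupp.single s 1

/-- The list of all literal occurrences of a 3-CNF formula. -/
def lits {p : ℕ} (φ : List ((Fin p × Bool) × (Fin p × Bool) × (Fin p × Bool))) :
    List (Fin p × Bool) :=
  φ.flatMap fun c => [c.1, c.2.1, c.2.2]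

/-- The semantic type `t c = d + z_{L₁} + z_{L₂} + z_{L₃}` of a clause `c`. -/
noncomputable def clauseType {α : Type*} {p : ℕ} (d : α) (z : Fin p × Bool → α)
    (c : (Fin p × Bool) × (Fin p × Bool) × (Fin p × Bool)) : α →₀ ℕ :=
  Finsupp.single d 1 + Finsupp.single (z c.1) 1 + Finsupp.single (z c.2.1) 1 +
    Finsupp.single (z c.2.2) 1

/-- The semantic type `v L = z_L + 2 • y_L` of a literal `L`. -/
noncomputable def litType {α : Type*} {p : ℕ} (z y : Fin p × Bool → α) (L : Fin p × Bool) :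
    α →₀ ℕ :=
  Finsupp.single (z L) 1 + 2 • Finsupp.single (y L) 1

/-- The big sentence: the word `S`, then for each clause `c_j` the words `C_j` and `D_j`,
then `n_L` copies of the word `X_L` for each literal `L` (one copy per occurrence of `L`
in the formula), all replaced by the chosen lifts. -/
noncomputable def bigSentence {α : Type*} {p : ℕ}
    (φ : List ((Fin p × Bool) × (Fin p × Bool) × (Fin p × Bool)))
    (hS : α × Bool →₀ ℕ) (hC hD : Fin φ.length → (α × Bool →₀ ℕ))
    (hX : Fin p × Bool → (α × Bool →₀ ℕ)) : List (α × Bool →₀ ℕ) :=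
  hS :: (((List.finRange φ.length).flatMap fun j => [hC j, hD j]) ++ (lits φ).map hX)

/-- A solution of the big sentence: all lifts are functional, have the prescribed images
under `forget`, and the big sentence is grammatical for `s`. -/
noncomputable def BigSolution {α : Type*} {p : ℕ} (s d : α) (z y : Fin p × Bool → α)
    (φ : List ((Fin p × Bool) × (Fin p × Bool) × (Fin p × Bool)))
    (hS : α × Bool →₀ ℕ) (hC hD : Fin φ.length → (α × Bool →₀ ℕ))
    (hX : Fin p × Bool → (α × Bool →₀ ℕ)) : Prop :=
  Functional hS ∧ forget hS = Finsupp.single s 1 ∧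
  (∀ j : Fin φ.length, Functional (hC j) ∧ forget (hC j) = clauseType d z (φ.get j)) ∧
  (∀ j : Fin φ.length, Functional (hD j) ∧ forget (hD j) = Finsupp.single d 1) ∧
  (∀ L ∈ lits φ, Functional (hX L) ∧ forget (hX L) = litType z y L) ∧
  Grammatical s (bigSentence φ hS hC hD hX)

section SignedMultiset

variable {α : Type*}

theorem forget_apply (μ : α × Bool →₀ ℕ) (a : α) : forget μ a = μ (a, false) + μ (a, true) :=
  rfl

theorem sgn_apply (μ : α × Bool →₀ ℕ) (a : α) :
    sgn μ a = (μ (a, false) : ℤ) - (μ (a, true) : ℤ) :=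
  rfl

theorem forget_add (μ ν : α × Bool →₀ ℕ) : forget (μ + ν) = forget μ + forget ν := by
  ext a; simp only [forget_apply, Finsupp.add_apply]; ring

theorem sgn_add (μ ν : α × Bool →₀ ℕ) : sgn (μ + ν) = sgn μ + sgn ν := by
  ext a; simp only [sgn_apply, Finsupp.add_apply]; push_cast; ring

theorem forget_single (a : α) (b : Bool) (n : ℕ) :
    forget (Finsupp.single (a, b) n) = Finsupp.single a n := by
  classical
  ext x
  cases b <;> simp [forget_apply, Finsupp.single_apply]

theorem sgn_single_false (a : α) (n : ℕ) :
    sgn (Finsupp.single (a, false) n) = Finsupp.single a (n : ℤ) := by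
  classical
  ext x; simp [sgn_apply, Finsupp.single_apply]

theorem sgn_single_true (a : α) (n : ℕ) :
    sgn (Finsupp.single (a, true) n) = -Finsupp.single a (n : ℤ) := by
  classical
  ext x; simp [sgn_apply, Finsupp.single_apply]

theorem sgn_single_not (a : α) (b : Bool) (n : ℕ) :
    sgn (Finsupp.single (a, !b) n) = -sgn (Finsupp.single (a, b) n) := by
  cases b <;> simp [sgn_single_false, sgn_single_true]

theorem sgn_apply_add_forget_apply (μ : α × Bool →₀ ℕ) (a : α) :
    sgn μ a + forget μ a = 2 * μ (a, false) := by
  rw [sgn_apply, forget_apply]; push_cast; ring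

theorem sgn_apply_eq_forget_apply {μ : α × Bool →₀ ℕ} {a : α} (h : μ (a, true) = 0) :
    sgn μ a = forget μ a := by
  rw [sgn_apply, forget_apply, h]; simp

theorem Functional.exists_pos {μ : α × Bool →₀ ℕ} (hμ : Functional μ) :
    ∃ a, 0 < μ (a, false) := by
  rcases hμ with ⟨a, rfl⟩ | ⟨a, -, ha, -⟩
  · exact ⟨a, by simp⟩
  · exact ⟨a, ha⟩

theorem Functional.eq_single_of_forget_eq_single {μ : α × Bool →₀ ℕ} {a : α}
    (hμ : Functional μ) (h : forget μ = Finsupp.single a 1) :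
    μ = Finsupp.single (a, false) 1 := by
  have hsupp : ∀ x, forget μ x ≠ 0 → x = a := fun x hx =>
    (Finsupp.single_apply_ne_zero.mp (h ▸ hx)).1
  have ha : forget μ a = 1 := by simp [h]
  rcases hμ with ⟨b, rfl⟩ | ⟨b, c, hb, hc⟩
  · rw [hsupp b (by simp [forget_single])]
  · obtain rfl := hsupp b (by rw [forget_apply]; omega)
    obtain rfl := hsupp c (by rw [forget_apply]; omega)
    rw [forget_apply] at ha
    omega

end SignedMultiset

section BigSentence

variable {α : Type*} {p : ℕ} {s d : α} {z y : Fin p × Bool → α}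
  {φ : List ((Fin p × Bool) × (Fin p × Bool) × (Fin p × Bool))}
  {hS : α × Bool →₀ ℕ} {hC hD : Fin φ.length → (α × Bool →₀ ℕ)}
  {hX : Fin p × Bool → (α × Bool →₀ ℕ)}

theorem mem_lits (j : Fin φ.length) :
    (φ.get j).1 ∈ lits φ ∧ (φ.get j).2.1 ∈ lits φ ∧ (φ.get j).2.2 ∈ lits φ := by
  refine ⟨?_, ?_, ?_⟩ <;> exact List.mem_flatMap.mpr ⟨φ.get j, List.get_mem φ j, by simp⟩

theorem clauseType_apply (c : (Fin p × Bool) × (Fin p × Bool) × (Fin p × Bool)) (x : α) :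
    clauseType d z c x = Finsupp.single d 1 x + Finsupp.single (z c.1) 1 x +
      Finsupp.single (z c.2.1) 1 x + Finsupp.single (z c.2.2) 1 x :=
  rfl

theorem sum_map_sgn_bigSentence :
    ((bigSentence φ hS hC hD hX).map sgn).sum = sgn hS + ∑ j, (sgn (hC j) + sgn (hD j) +
      (sgn (hX (φ.get j).1) + sgn (hX (φ.get j).2.1) + sgn (hX (φ.get j).2.2))) := by
  have hlits : lits φ = (List.finRange φ.length).flatMap
      fun j => [(φ.get j).1, (φ.get j).2.1, (φ.get j).2.2] := by
    conv_lhs => rw [lits, ← List.map_get_finRange φ, List.flatMap_map]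
  simp [bigSentence, hlits, List.flatMap_def, List.sum_flatten, Fin.sum_univ_def,
    ← List.sum_map_add, add_assoc]

theorem eq_or_eq_of_clauseType_apply_ne_zero
    {c : (Fin p × Bool) × (Fin p × Bool) × (Fin p × Bool)} {x : α}
    (h : clauseType d z c x ≠ 0) : x = d ∨ x = z c.1 ∨ x = z c.2.1 ∨ x = z c.2.2 := by
  contrapose! h
  simp [clauseType_apply, Finsupp.single_eq_of_ne, h]

theorem litType_apply_z (hzy : ∀ L L', z L ≠ y L') (L L₀ : Fin p × Bool) :
    litType z y L (z L₀) = Finsupp.single (z L) 1 (z L₀) := by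
  simp [litType, Finsupp.single_eq_of_ne, hzy]

theorem litType_apply_d (hdz : ∀ L, d ≠ z L) (hdy : ∀ L, d ≠ y L) (L : Fin p × Bool) :
    litType z y L d = 0 := by
  simp [litType, Finsupp.single_eq_of_ne, hdz, hdy]

namespace BigSolution

theorem hS_eq (hsol : BigSolution s d z y φ hS hC hD hX) : hS = Finsupp.single (s, false) 1 :=
  hsol.1.eq_single_of_forget_eq_single hsol.2.1

theorem hD_eq (hsol : BigSolution s d z y φ hS hC hD hX) (j : Fin φ.length) :
    hD j = Finsupp.single (d, false) 1 :=
  (hsol.2.2.2.1 j).1.eq_single_of_forget_eq_single (hsol.2.2.2.1 j).2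

theorem sum_sgn_clauseBlocks (hsol : BigSolution s d z y φ hS hC hD hX) :
    ∑ j, (sgn (hC j) + sgn (hD j) +
      (sgn (hX (φ.get j).1) + sgn (hX (φ.get j).2.1) + sgn (hX (φ.get j).2.2))) = 0 := by
  have h := hsol.2.2.2.2.2
  rw [Grammatical, sum_map_sgn_bigSentence, hsol.hS_eq, sgn_single_false, Nat.cast_one] at h
  exact add_eq_left.mp h

theorem hC_apply_false_eq_zero (hsol : BigSolution s d z y φ hS hC hD hX) {x : α}
    (hx : ∀ L ∈ lits φ, sgn (hX L) x = (Finsupp.single (z L) 1 x : ℕ)) (j : Fin φ.length) :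
    hC j (x, false) = 0 := by
  classical
  have hblock : ∀ i, (sgn (hC i) + sgn (hD i) + (sgn (hX (φ.get i).1) +
      sgn (hX (φ.get i).2.1) + sgn (hX (φ.get i).2.2))) x = ((2 * hC i (x, false) : ℕ) : ℤ) := by
    intro i
    obtain ⟨h₁, h₂, h₃⟩ := mem_lits i
    rw [Nat.cast_mul, Nat.cast_ofNat, ← sgn_apply_add_forget_apply, (hsol.2.2.1 i).2,
      clauseType_apply, hsol.hD_eq, sgn_single_false]
    simp only [Finsupp.add_apply, hx _ h₁, hx _ h₂, hx _ h₃]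
    push_cast [Finsupp.single_apply]
    ring
  have hsum := congrArg (· x) hsol.sum_sgn_clauseBlocks
  simp only [Finsupp.finsetSum_apply, hblock, Finsupp.coe_zero, Pi.zero_apply] at hsum
  have := Finset.sum_eq_zero_iff.mp (by exact_mod_cast hsum) j (Finset.mem_univ j)
  omega

theorem sgn_hX_apply_d (hsol : BigSolution s d z y φ hS hC hD hX) (hdz : ∀ L, d ≠ z L)
    (hdy : ∀ L, d ≠ y L) : ∀ L ∈ lits φ, sgn (hX L) d = (Finsupp.single (z L) 1 d : ℕ) := by
  intro L hL
  have hforget : forget (hX L) d = 0 := by rw [(hsol.2.2.2.2.1 L hL).2, litType_apply_d hdz hdy]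
  rw [sgn_apply_eq_forget_apply (by rw [forget_apply] at hforget; omega), hforget,
    Finsupp.single_eq_of_ne (hdz L)]

theorem sgn_hX_apply_z (hsol : BigSolution s d z y φ hS hC hD hX) (hz : Function.Injective z)
    (hzy : ∀ L L', z L ≠ y L') {L₀ : Fin p × Bool} (hL₀ : hX L₀ (z L₀, true) ≠ 1) :
    ∀ L ∈ lits φ, sgn (hX L) (z L₀) = (Finsupp.single (z L) 1 (z L₀) : ℕ) := by
  intro L hL
  have hforget : forget (hX L) (z L₀) = Finsupp.single (z L) 1 (z L₀) := by
    rw [(hsol.2.2.2.2.1 L hL).2, litType_apply_z hzy]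
  rw [← hforget]
  apply sgn_apply_eq_forget_apply
  rw [forget_apply] at hforget
  by_cases hL : L = L₀
  · subst hL
    simp only [Finsupp.single_eq_same] at hforget
    omega
  · rw [Finsupp.single_eq_of_ne (hz.ne (Ne.symm hL))] at hforget
    omega

theorem clause_satisfied (hsol : BigSolution s d z y φ hS hC hD hX)
    (hz : Function.Injective z) (hdz : ∀ L, d ≠ z L) (hdy : ∀ L, d ≠ y L)
    (hzy : ∀ L L', z L ≠ y L') (j : Fin φ.length) :
    hX (φ.get j).1 (z (φ.get j).1, true) = 1 ∨ hX (φ.get j).2.1 (z (φ.get j).2.1, true) = 1 ∨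
      hX (φ.get j).2.2 (z (φ.get j).2.2, true) = 1 := by
  obtain ⟨a, ha⟩ := (hsol.2.2.1 j).1.exists_pos
  have hne : clauseType d z (φ.get j) a ≠ 0 := by
    rw [← (hsol.2.2.1 j).2, forget_apply]; omega
  have hfalse := fun {L₀} h =>
    hsol.hC_apply_false_eq_zero (hsol.sgn_hX_apply_z hz hzy (L₀ := L₀) h) j
  rcases eq_or_eq_of_clauseType_apply_ne_zero hne with rfl | rfl | rfl | rfl
  · exact absurd (hsol.hC_apply_false_eq_zero (hsol.sgn_hX_apply_d hdz hdy) j) ha.ne'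
  · by_contra! h; exact ha.ne' (hfalse h.1)
  · by_contra! h; exact ha.ne' (hfalse h.2.1)
  · by_contra! h; exact ha.ne' (hfalse h.2.2)

end BigSolution

noncomputable def clauseLift (d : α) (z : Fin p × Bool → α) (A : Fin p × Bool → Bool)
    (c : (Fin p × Bool) × (Fin p × Bool) × (Fin p × Bool)) : α × Bool →₀ ℕ :=
  Finsupp.single (d, true) 1 + Finsupp.single (z c.1, !A c.1) 1 +
    Finsupp.single (z c.2.1, !A c.2.1) 1 + Finsupp.single (z c.2.2, !A c.2.2) 1

noncomputable def litLift (z y : Fin p × Bool → α) (A : Fin p × Bool → Bool)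
    (L : Fin p × Bool) : α × Bool →₀ ℕ :=
  Finsupp.single (z L, A L) 1 + Finsupp.single (y L, false) 1 + Finsupp.single (y L, true) 1

theorem forget_clauseLift (A : Fin p × Bool → Bool)
    (c : (Fin p × Bool) × (Fin p × Bool) × (Fin p × Bool)) :
    forget (clauseLift d z A c) = clauseType d z c := by
  simp only [clauseLift, clauseType, forget_add, forget_single]

theorem functional_clauseLift {A : Fin p × Bool → Bool}
    {c : (Fin p × Bool) × (Fin p × Bool) × (Fin p × Bool)}
    (hc : A c.1 = true ∨ A c.2.1 = true ∨ A c.2.2 = true) :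
    Functional (clauseLift d z A c) := by
  refine Or.inr ?_
  rcases hc with h | h | h
  · exact ⟨z c.1, d, by simp [clauseLift, h], by simp [clauseLift]⟩
  · exact ⟨z c.2.1, d, by simp [clauseLift, h], by simp [clauseLift]⟩
  · exact ⟨z c.2.2, d, by simp [clauseLift, h], by simp [clauseLift]⟩

theorem forget_litLift (A : Fin p × Bool → Bool) (L : Fin p × Bool) :
    forget (litLift z y A L) = litType z y L := by
  simp only [litLift, litType, forget_add, forget_single, two_smul, add_assoc]

theorem functional_litLift (A : Fin p × Bool → Bool) (L : Fin p × Bool) :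
    Functional (litLift z y A L) :=
  Or.inr ⟨y L, y L, by simp [litLift], by simp [litLift]⟩

theorem litLift_apply_z_true (hzy : ∀ L L', z L ≠ y L') (A : Fin p × Bool → Bool)
    (L : Fin p × Bool) : litLift z y A L (z L, true) = 1 ↔ A L = true := by
  cases h : A L <;> simp [litLift, h, hzy]

theorem sgn_clauseBlock_lift (A : Fin p × Bool → Bool)
    (c : (Fin p × Bool) × (Fin p × Bool) × (Fin p × Bool)) :
    sgn (clauseLift d z A c) + sgn (Finsupp.single (d, false) 1) +
      (sgn (litLift z y A c.1) + sgn (litLift z y A c.2.1) + sgn (litLift z y A c.2.2)) = 0 := by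
  simp only [clauseLift, litLift, sgn_add, sgn_single_not, sgn_single_false, sgn_single_true]
  abel

theorem bigSolution_lift {A : Fin p × Bool → Bool}
    (hA : ∀ c ∈ φ, A c.1 = true ∨ A c.2.1 = true ∨ A c.2.2 = true) :
    BigSolution s d z y φ (Finsupp.single (s, false) 1) (fun j => clauseLift d z A (φ.get j))
      (fun _ => Finsupp.single (d, false) 1) (litLift z y A) := by
  refine ⟨Or.inl ⟨s, rfl⟩, forget_single s false 1,
    fun j => ⟨functional_clauseLift (hA _ (List.get_mem φ j)), forget_clauseLift A _⟩,
    fun _ => ⟨Or.inl ⟨d, rfl⟩, forget_single d false 1⟩,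
    fun L _ => ⟨functional_litLift A L, forget_litLift A L⟩, ?_⟩
  rw [Grammatical, sum_map_sgn_bigSentence, sgn_single_false, Nat.cast_one]
  simp [sgn_clauseBlock_lift]

end BigSentence

theorem big_sentence_characterization_general {α : Type*} {p : ℕ} (s d : α)
    (z y : Fin p × Bool → α)
    (hz : Function.Injective z)
    (hdz : ∀ L, d ≠ z L) (hdy : ∀ L, d ≠ y L) (hzy : ∀ L L', z L ≠ y L')
    (φ : List ((Fin p × Bool) × (Fin p × Bool) × (Fin p × Bool))) :
    (∀ A : Fin p × Bool → Bool,
      (∀ c ∈ φ, A c.1 = true ∨ A c.2.1 = true ∨ A c.2.2 = true) →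
      ∃ (hS : α × Bool →₀ ℕ) (hC hD : Fin φ.length → (α × Bool →₀ ℕ))
        (hX : Fin p × Bool → (α × Bool →₀ ℕ)),
        BigSolution s d z y φ hS hC hD hX ∧
        ∀ L ∈ lits φ, (hX L (z L, true) = 1 ↔ A L = true)) ∧
    (∀ (hS : α × Bool →₀ ℕ) (hC hD : Fin φ.length → (α × Bool →₀ ℕ))
        (hX : Fin p × Bool → (α × Bool →₀ ℕ)),
      BigSolution s d z y φ hS hC hD hX →
      ∀ c ∈ φ, hX c.1 (z c.1, true) = 1 ∨ hX c.2.1 (z c.2.1, true) = 1 ∨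
        hX c.2.2 (z c.2.2, true) = 1) := by
  refine ⟨fun A hA => ⟨_, _, _, _, bigSolution_lift hA, fun L _ => litLift_apply_z_true hzy A L⟩,
    ?_⟩
  intro hS hC hD hX hsol c hc
  obtain ⟨j, rfl⟩ := List.get_of_mem hc
  exact hsol.clause_satisfied hz hdz hdy hzy j

/-- The assignments making the big sentence grammatical are exactly those in which the
variables are assigned truth values making all the clauses true:
(i) every truth assignment making every clause true yields a solution of the big sentence
in which `h_{X_L} (z_L, true) = 1` iff `L` is true;
(ii) in every solution of the big sentence, every clause contains a literal `L` with
`h_{X_L} (z_L, true) = 1`. -/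
theorem big_sentence_characterization {α : Type*} {p : ℕ} (s d : α)
    (z y : Fin p × Bool → α)
    (hz : Function.Injective z) (hy : Function.Injective y)
    (hsd : s ≠ d) (hsz : ∀ L, s ≠ z L) (hsy : ∀ L, s ≠ y L)
    (hdz : ∀ L, d ≠ z L) (hdy : ∀ L, d ≠ y L) (hzy : ∀ L L', z L ≠ y L')
    (φ : List ((Fin p × Bool) × (Fin p × Bool) × (Fin p × Bool))) :
    (∀ A : Fin p × Bool → Bool,
      (∀ c ∈ φ, A c.1 = true ∨ A c.2.1 = true ∨ A c.2.2 = true) →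
      ∃ (hS : α × Bool →₀ ℕ) (hC hD : Fin φ.length → (α × Bool →₀ ℕ))
        (hX : Fin p × Bool → (α × Bool →₀ ℕ)),
        BigSolution s d z y φ hS hC hD hX ∧
        ∀ L ∈ lits φ, (hX L (z L, true) = 1 ↔ A L = true)) ∧
    (∀ (hS : α × Bool →₀ ℕ) (hC hD : Fin φ.length → (α × Bool →₀ ℕ))
        (hX : Fin p × Bool → (α × Bool →₀ ℕ)),
      BigSolution s d z y φ hS hC hD hX →
      ∀ c ∈ φ, hX c.1 (z c.1, true) = 1 ∨ hX c.2.1 (z c.2.1, true) = 1 ∨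
        hX c.2.2 (z c.2.2, true) = 1) :=
  big_sentence_characterization_general s d z y hz hdz hdy hzy φ
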